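/- Let C be a q×q simple circuit matrix and let D be the q×q diagonal matrix whose i-th diagonal entry is the i-th row sum of C. Then the 2q×2q block matrix A = (1/(2·tr D)) · [[D, C],[Cᵀ, D]] is a density matrix and is separable in ℂ^2 ⊗ ℂ^q. -/

import Mathlib

open Matrix BigOperators Kronecker
open scoped ComplexOrder

noncomputable section

/-- The `(p,q)`-partial transpose of a matrix indexed by `Fin p × Fin q`:
`A^pT_{(i,j),(k,l)} = A_{(i,l),(k,j)}`. -/
def ptrans {p q : ℕ} {α : Type*} (A : Matrix (Fin p × Fin q) (Fin p × Fin q) α) :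
    Matrix (Fin p × Fin q) (Fin p × Fin q) α :=
  fun x y => A (x.1, y.2) (y.1, x.2)

/-- A density matrix: Hermitian, positive semidefinite, with trace 1. -/
def IsDensityMatrix {n : Type*} [Fintype n] (ρ : Matrix n n ℂ) : Prop :=
  ρ.IsHermitian ∧ ρ.PosSemidef ∧ ρ.trace = 1

/-- Separability in ℂ^p ⊗ ℂ^q : a finite convex combination of Kronecker products
of density matrices. -/
def SeparableState {p q : ℕ} (A : Matrix (Fin p × Fin q) (Fin p × Fin q) ℂ) : Prop :=
  ∃ (m : ℕ) (c : Fin m → ℝ) (ρ : Fin m → Matrix (Fin p) (Fin p) ℂ)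
    (η : Fin m → Matrix (Fin q) (Fin q) ℂ),
    (∀ i, 0 ≤ c i) ∧ (∑ i, c i) = 1 ∧
    (∀ i, IsDensityMatrix (ρ i)) ∧ (∀ i, IsDensityMatrix (η i)) ∧
    A = ∑ i, (c i : ℂ) • (ρ i ⊗ₖ η i)

/-- Separability of a real matrix, viewed as a complex matrix. -/
def SeparableStateR {p q : ℕ} (A : Matrix (Fin p × Fin q) (Fin p × Fin q) ℝ) : Prop :=
  SeparableState (A.map (fun x => (x : ℂ)))

/-- A square real matrix is line sum symmetric if each row sum equals the
corresponding column sum. -/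
def LineSumSymm {q : ℕ} (B : Matrix (Fin q) (Fin q) ℝ) : Prop :=
  ∀ j, (∑ l, B j l) = ∑ l, B l j

/-- A simple circuit matrix: there are distinct indices `i_1, …, i_k` (`k ≥ 1`) with
`C_{i_m i_{m+1}} = 1` (cyclically) and all other entries 0. -/
def IsSimpleCircuit {q : ℕ} (C : Matrix (Fin q) (Fin q) ℝ) : Prop :=
  ∃ (k : ℕ) (hk : 0 < k) (f : Fin k → Fin q), Function.Injective f ∧
    ∀ a b : Fin q, C a b =
      if ∃ m : Fin k, a = f m ∧ b = f ⟨((m : ℕ) + 1) % k, Nat.mod_lt _ hk⟩ then 1 else 0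

/-- The 2q×2q block matrix `[[A11, A12], [A21, A22]]` indexed by `Fin 2 × Fin q`. -/
def twoBlock {q : ℕ} {α : Type*} (A11 A12 A21 A22 : Matrix (Fin q) (Fin q) α) :
    Matrix (Fin 2 × Fin q) (Fin 2 × Fin q) α :=
  fun a b =>
    if a.1 = 0 then (if b.1 = 0 then A11 a.2 b.2 else A12 a.2 b.2)
    else (if b.1 = 0 then A21 a.2 b.2 else A22 a.2 b.2)

/-- The q×q block `A^{i,k}` of a matrix indexed by `Fin p × Fin q`. -/
def blockOf {p q : ℕ} (A : Matrix (Fin p × Fin q) (Fin p × Fin q) ℝ) (i k : Fin p) :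
    Matrix (Fin q) (Fin q) ℝ :=
  fun j l => A (i, j) (k, l)

/-!
Index the circuit by `ZMod k`, say `i_m = g m`. Then `D`, `C` and `Cᵀ` are the partial shift
matrices `S_j = ∑ₘ E_{g m, g (m + j)}` for `j = 0, 1, -1`, so the `(i, i')` block of the matrix is
`S_{i' - i}`. For the standard additive character `e` of `ZMod k`, the product vectors
`(e (t i))ᵢ ⊗ ∑ₘ e (-t m) e_{g m}`, `t ∈ ZMod k`, have projections whose uniform average is, by
orthogonality of characters, exactly the normalized block matrix. So the matrix is a mixture of
product states, and every separable state is a density matrix.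
-/

theorem SeparableState.isDensityMatrix {p q : ℕ}
    {A : Matrix (Fin p × Fin q) (Fin p × Fin q) ℂ} (hA : SeparableState A) :
    IsDensityMatrix A := by
  obtain ⟨m, c, ρ, η, hc, hsum, hρ, hη, rfl⟩ := hA
  have hpsd : (∑ i, (c i : ℂ) • (ρ i ⊗ₖ η i)).PosSemidef :=
    posSemidef_sum _ fun i _ =>
      ((hρ i).2.1.kronecker (hη i).2.1).smul (Complex.zero_le_real.mpr (hc i))
  refine ⟨hpsd.isHermitian, hpsd, ?_⟩
  simp only [trace_sum, trace_smul, trace_kronecker, (hρ _).2.2, (hη _).2.2, mul_one,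
    smul_eq_mul]
  exact_mod_cast hsum

theorem separableState_sum_smul_kronecker {p q : ℕ} {ι : Type*} [Fintype ι] (c : ι → ℝ)
    (ρ : ι → Matrix (Fin p) (Fin p) ℂ) (η : ι → Matrix (Fin q) (Fin q) ℂ)
    (hc : ∀ i, 0 ≤ c i) (hsum : ∑ i, c i = 1)
    (hρ : ∀ i, IsDensityMatrix (ρ i)) (hη : ∀ i, IsDensityMatrix (η i)) :
    SeparableState (∑ i, (c i : ℂ) • (ρ i ⊗ₖ η i)) := by
  let e := (Fintype.equivFin ι).symm
  exact ⟨_, c ∘ e, ρ ∘ e, η ∘ e, fun i => hc _, (e.sum_comp c).trans hsum,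
    fun i => hρ _, fun i => hη _, (e.sum_comp fun i => (c i : ℂ) • (ρ i ⊗ₖ η i)).symm⟩

theorem isDensityMatrix_inv_smul_vecMulVec {n : Type*} [Fintype n] (w : n → ℂ) {r : ℝ}
    (hr : 0 < r) (hw : w ⬝ᵥ star w = r) :
    IsDensityMatrix (((r⁻¹ : ℝ) : ℂ) • vecMulVec w (star w)) := by
  have hpsd := (posSemidef_vecMulVec_self_star w).smul
    (Complex.zero_le_real.mpr (inv_nonneg.mpr hr.le))
  refine ⟨hpsd.isHermitian, hpsd, ?_⟩
  rw [trace_smul, trace_vecMulVec, hw, smul_eq_mul, ← Complex.ofReal_mul,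
    inv_mul_cancel₀ hr.ne', Complex.ofReal_one]

theorem AddChar.mul_star_eq_map_sub {G : Type*} [AddCommGroup G] [Finite G] (ψ : AddChar G ℂ)
    (x y : G) : ψ x * star (ψ y) = ψ (x - y) := by
  rw [Complex.star_def, ← AddChar.map_neg_eq_conj, ← AddChar.map_add_eq_mul, sub_eq_add_neg]

section Circuit

variable {k q : ℕ} [NeZero k]

def circuitShift (g : ZMod k → Fin q) (j : ZMod k) : Matrix (Fin q) (Fin q) ℝ :=
  fun a b => ∑ m, if g m = a ∧ g (m + j) = b then 1 else 0

theorem sum_circuitShift_apply (g : ZMod k → Fin q) (j : ZMod k) (a : Fin q) :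
    ∑ b, circuitShift g j a b = ∑ m, if g m = a then 1 else 0 := by
  simp only [circuitShift]
  rw [Finset.sum_comm]
  simp [ite_and]

theorem diagonal_sum_circuitShift (g : ZMod k → Fin q) (j : ZMod k) :
    diagonal (fun a => ∑ b, circuitShift g j a b) = circuitShift g 0 := by
  ext a b
  by_cases hab : a = b
  · subst hab
    rw [diagonal_apply_eq, sum_circuitShift_apply]
    simp only [circuitShift, add_zero, and_self]
  · rw [diagonal_apply_ne _ hab]
    simp only [circuitShift, add_zero]
    exact (Finset.sum_eq_zero fun m _ => if_neg fun h => hab (h.1.symm.trans h.2)).symm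

theorem trace_circuitShift_zero (g : ZMod k → Fin q) : (circuitShift g 0).trace = k := by
  simp only [trace, diag, circuitShift, add_zero, and_self]
  rw [Finset.sum_comm]
  simp

theorem transpose_circuitShift (g : ZMod k → Fin q) (j : ZMod k) :
    (circuitShift g j)ᵀ = circuitShift g (-j) := by
  ext a b
  simp only [transpose_apply, circuitShift]
  exact Fintype.sum_equiv (Equiv.addRight j) _ _ fun m => by simp [and_comm]

def circuitBlock (p : ℕ) (g : ZMod k → Fin q) : Matrix (Fin p × Fin q) (Fin p × Fin q) ℝ :=
  fun x y => circuitShift g ((y.1 : ℕ) - (x.1 : ℕ)) x.2 y.2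

theorem twoBlock_circuitShift (g : ZMod k → Fin q) :
    twoBlock (circuitShift g 0) (circuitShift g 1) (circuitShift g 1)ᵀ (circuitShift g 0) =
      circuitBlock 2 g := by
  rw [transpose_circuitShift]
  ext ⟨i, a⟩ ⟨i', a'⟩
  fin_cases i <;> fin_cases i' <;> simp [twoBlock, circuitBlock]

end Circuit

theorem IsSimpleCircuit.exists_eq_circuitShift {q : ℕ} {C : Matrix (Fin q) (Fin q) ℝ}
    (hC : IsSimpleCircuit C) :
    ∃ (k : ℕ) (_ : NeZero k) (g : ZMod k → Fin q), Function.Injective g ∧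
      C = circuitShift g 1 := by
  obtain ⟨k, hk, f, hf, hCf⟩ := hC
  have hk' : NeZero k := ⟨hk.ne'⟩
  let g : ZMod k → Fin q := fun z => f ⟨z.val, z.val_lt⟩
  have hg : Function.Injective g := fun z z' h =>
    ZMod.val_injective k (Fin.mk.inj_iff.mp (hf h))
  have hg_succ (z : ZMod k) : g (z + 1) = f ⟨(z.val + 1) % k, Nat.mod_lt _ hk⟩ := by
    simp only [g, ZMod.val_add, ZMod.val_one_eq_one_mod, Nat.add_mod_mod]
  have hexists (a b : Fin q) : (∃ m : Fin k, a = f m ∧ b = f ⟨(m + 1) % k, Nat.mod_lt _ hk⟩) ↔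
      ∃ z, g z = a ∧ g (z + 1) = b := by
    refine ⟨fun ⟨m, ha, hb⟩ => ⟨m, ?_, ?_⟩, fun ⟨z, ha, hb⟩ => ⟨⟨z.val, z.val_lt⟩, ?_, ?_⟩⟩
    · simp [g, ha, ZMod.val_natCast, Nat.mod_eq_of_lt m.isLt]
    · rw [hg_succ, hb]; simp [ZMod.val_natCast, Nat.mod_eq_of_lt m.isLt]
    · exact ha.symm
    · rw [← hb, hg_succ]
  refine ⟨k, hk', g, hg, funext fun a => funext fun b => ?_⟩
  rw [hCf, circuitShift, if_congr (hexists a b) rfl rfl]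
  split_ifs with h
  · obtain ⟨z, hz⟩ := h
    rw [Finset.sum_eq_single z (fun m _ hm => if_neg fun h' => hm (hg (h'.1.trans hz.1.symm)))
      (by simp), if_pos hz]
  · exact (Finset.sum_eq_zero fun m _ => if_neg fun h' => h ⟨m, h'⟩).symm

section Fourier

open ZMod

variable {k q : ℕ} [NeZero k]

def fourierVec (p : ℕ) (t : ZMod k) : Fin p → ℂ := fun i => stdAddChar (t * ((i : ℕ) : ZMod k))

def circuitFourierVec (g : ZMod k → Fin q) (t : ZMod k) : Fin q → ℂ :=
  fun a => ∑ m, if g m = a then stdAddChar (-(t * m)) else 0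

theorem fourierVec_mul_star (p : ℕ) (t : ZMod k) (i i' : Fin p) :
    fourierVec p t i * star (fourierVec p t i') =
      stdAddChar (t * ((i : ℕ) - (i' : ℕ) : ZMod k)) := by
  rw [fourierVec, fourierVec, AddChar.mul_star_eq_map_sub, mul_sub]

theorem dotProduct_star_fourierVec (p : ℕ) (t : ZMod k) :
    fourierVec p t ⬝ᵥ star (fourierVec p t) = p := by
  simp only [dotProduct, Pi.star_apply, fourierVec_mul_star, sub_self, mul_zero,
    AddChar.map_zero_eq_one]
  simp

theorem circuitFourierVec_mul_star (g : ZMod k → Fin q) (t : ZMod k) (a a' : Fin q) :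
    circuitFourierVec g t a * star (circuitFourierVec g t a') =
      ∑ m, ∑ n, if g m = a ∧ g n = a' then stdAddChar (t * (n - m)) else 0 := by
  simp only [circuitFourierVec, star_sum, Finset.sum_mul_sum]
  refine Finset.sum_congr rfl fun m _ => Finset.sum_congr rfl fun n _ => ?_
  by_cases hm : g m = a <;> by_cases hn : g n = a' <;>
    simp only [hm, hn, if_true, if_false, and_true, and_false, star_zero, mul_zero,
      zero_mul, AddChar.mul_star_eq_map_sub]
  ring_nf

theorem dotProduct_star_circuitFourierVec {g : ZMod k → Fin q} (hg : Function.Injective g)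
    (t : ZMod k) : circuitFourierVec g t ⬝ᵥ star (circuitFourierVec g t) = k := by
  simp only [dotProduct, Pi.star_apply, circuitFourierVec_mul_star]
  simp [Finset.sum_comm (γ := Fin q), ite_and, hg.eq_iff]

theorem sum_stdAddChar_mul_circuitFourierVec_mul_star (g : ZMod k → Fin q) (d : ZMod k)
    (a a' : Fin q) :
    ∑ t, stdAddChar (t * d) * (circuitFourierVec g t a * star (circuitFourierVec g t a')) =
      k * circuitShift g (-d) a a' := by
  calc _ = ∑ m, ∑ n, if g m = a ∧ g n = a' then ∑ t, stdAddChar (t * (d + (n - m))) else 0 := by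
        simp_rw [circuitFourierVec_mul_star, Finset.mul_sum, mul_ite, mul_zero,
          ← AddChar.map_add_eq_mul, ← mul_add]
        rw [Finset.sum_comm]
        refine Finset.sum_congr rfl fun m _ => ?_
        rw [Finset.sum_comm]
        simp only [Finset.sum_ite_irrel, Finset.sum_const_zero]
    _ = ∑ m, ∑ n, if n = m + -d then (if g m = a ∧ g n = a' then (k : ℂ) else 0) else 0 := by
        refine Finset.sum_congr rfl fun m _ => Finset.sum_congr rfl fun n _ => ?_
        have hcancel : d + (n - m) = 0 ↔ n = m + -d := by
          constructor <;> intro h <;> linear_combination h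
        rw [AddChar.sum_mulShift _ (isPrimitive_stdAddChar k), ZMod.card]
        by_cases h : g m = a ∧ g n = a' <;> by_cases h' : n = m + -d <;> simp [h, h', hcancel]
    _ = k * circuitShift g (-d) a a' := by
        simp only [Finset.sum_ite_eq', Finset.mem_univ, if_true, circuitShift, Complex.ofReal_sum,
          Finset.mul_sum]
        refine Finset.sum_congr rfl fun m _ => ?_
        split_ifs <;> simp

def fourierState (p : ℕ) (t : ZMod k) : Matrix (Fin p) (Fin p) ℂ :=
  (((p : ℝ)⁻¹ : ℝ) : ℂ) • vecMulVec (fourierVec p t) (star (fourierVec p t))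

def circuitFourierState (g : ZMod k → Fin q) (t : ZMod k) : Matrix (Fin q) (Fin q) ℂ :=
  (((k : ℝ)⁻¹ : ℝ) : ℂ) • vecMulVec (circuitFourierVec g t) (star (circuitFourierVec g t))

theorem map_ofReal_smul_circuitBlock (p : ℕ) (g : ZMod k → Fin q) :
    (((p : ℝ) * k)⁻¹ • circuitBlock p g).map ((↑) : ℝ → ℂ) =
      ∑ t, (((k : ℝ)⁻¹ : ℝ) : ℂ) • (fourierState p t ⊗ₖ circuitFourierState g t) := by
  ext ⟨i, a⟩ ⟨i', a'⟩
  simp only [map_apply, Matrix.smul_apply, Matrix.sum_apply, kroneckerMap_apply, fourierState,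
    circuitFourierState, vecMulVec_apply, Pi.star_apply, smul_eq_mul, fourierVec_mul_star]
  calc _ = ((p : ℂ) * k)⁻¹ * (k : ℂ)⁻¹ * ∑ t, stdAddChar (t * ((i : ℕ) - (i' : ℕ) : ZMod k)) *
        (circuitFourierVec g t a * star (circuitFourierVec g t a')) := by
        rw [sum_stdAddChar_mul_circuitFourierVec_mul_star, neg_sub]
        simp only [circuitBlock]
        push_cast
        field_simp
    _ = _ := by
        rw [Finset.mul_sum]
        refine Finset.sum_congr rfl fun t _ => ?_
        push_cast
        ring

theorem separableStateR_smul_circuitBlock (p : ℕ) [NeZero p] {g : ZMod k → Fin q}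
    (hg : Function.Injective g) : SeparableStateR (((p : ℝ) * k)⁻¹ • circuitBlock p g) := by
  rw [SeparableStateR, map_ofReal_smul_circuitBlock]
  refine separableState_sum_smul_kronecker _ _ _ (fun _ => by positivity) ?_
    (fun t => isDensityMatrix_inv_smul_vecMulVec _ (Nat.cast_pos.mpr (NeZero.pos _)) ?_)
    (fun t => isDensityMatrix_inv_smul_vecMulVec _ (Nat.cast_pos.mpr (NeZero.pos _)) ?_)
  · simp [ZMod.card]
  · exact_mod_cast dotProduct_star_fourierVec p t
  · exact_mod_cast dotProduct_star_circuitFourierVec hg t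

end Fourier

/-- for a simple circuit matrix C with row-sum diagonal D, the block
matrix (1/(2 tr D)) [[D, C],[Cᵀ, D]] is a separable density matrix in ℂ² ⊗ ℂ^q. -/
theorem stmt7 {q : ℕ} (C : Matrix (Fin q) (Fin q) ℝ) (hC : IsSimpleCircuit C)
    (D : Matrix (Fin q) (Fin q) ℝ)
    (hD : D = Matrix.diagonal (fun i => ∑ j, C i j))
    (A : Matrix (Fin 2 × Fin q) (Fin 2 × Fin q) ℝ)
    (hA : A = (1 / (2 * D.trace)) • twoBlock D C Cᵀ D) :
    IsDensityMatrix (A.map (fun x => (x : ℂ))) ∧ SeparableStateR A := by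
  obtain ⟨k, _, g, hg, rfl⟩ := hC.exists_eq_circuitShift
  have hD0 : D = circuitShift g 0 := hD.trans (diagonal_sum_circuitShift g 1)
  have hA' : A = (((2 : ℕ) : ℝ) * k)⁻¹ • circuitBlock 2 g := by
    rw [hA, hD0, trace_circuitShift_zero, twoBlock_circuitShift, one_div, Nat.cast_ofNat]
  have hsep : SeparableStateR A := hA' ▸ separableStateR_smul_circuitBlock 2 hg
  exact ⟨SeparableState.isDensityMatrix hsep, hsep⟩
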